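/- Let V be an optimal prefix-free machine, T a computable real in (0,1], and F a prefix-free machine with infinite domain enumerated as p₀, p₁, p₂, …. Suppose d ∈ ℕ satisfies Z_V(T; i) ≥ 2^{−|p_i|/T − d} for all i, where Z_V(T; s) = ∑_{V(p)=s} 2^{−|p|/T}. If k is such that ∑_{i=0}^{k} Z_V(T; i) > Z_V(T) − 2^{−⌈n/T⌉ − d}, then every i > k satisfies |p_i| > n; consequently {p ∈ Dom F : |p| ≤ n} = {p_i : i ≤ k and |p_i| ≤ n}. -/

import Mathlib

open Filter

/-- A set of binary strings is prefix-free if no member is a proper prefix of another. -/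
def PrefixFreeSet (S : Set (List Bool)) : Prop :=
  ∀ p ∈ S, ∀ q ∈ S, p <+: q → p = q

/-- A prefix-free machine: a partial recursive function on binary strings
whose domain is prefix-free. -/
structure PrefixFreeMachine where
  F : List Bool →. List Bool
  partrec : Partrec F
  prefixFree : PrefixFreeSet F.Dom

/-- Optimality of a prefix-free machine. -/
def PrefixFreeMachine.Optimal (V : PrefixFreeMachine) : Prop :=
  ∀ F : PrefixFreeMachine, ∃ d : ℕ, ∀ p ∈ F.F.Dom,
    ∃ q ∈ V.F.Dom, V.F q = F.F p ∧ q.length ≤ p.length + d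

/-- The program-size complexity of `s` with respect to the machine `M`
(`⊤` if `s` is not in the range of `M`). -/
noncomputable def Hm (M : PrefixFreeMachine) (s : List Bool) : ℕ∞ :=
  sInf ((fun p : List Bool => (p.length : ℕ∞)) '' {p | s ∈ M.F p})

/-- The complexity, viewed in the extended reals. -/
noncomputable def HmE (M : PrefixFreeMachine) (s : List Bool) : EReal :=
  if h : Hm M s = ⊤ then ⊤ else (((Hm M s).untop h : ℕ) : EReal)

/-- The `i`-th bit (starting from `i = 0`) of the base-two expansion of the
fractional part of `α`, chosen with infinitely many zeros. -/
noncomputable def rbit (α : ℝ) (i : ℕ) : Bool :=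
  decide (⌊Int.fract α * 2 ^ (i + 1)⌋ % 2 = 1)

/-- The first `n` bits of the base-two expansion of `α - ⌊α⌋`. -/
noncomputable def restr (α : ℝ) (n : ℕ) : List Bool :=
  (List.range n).map (rbit α)

/-- A real is computable. -/
def ComputableReal (α : ℝ) : Prop :=
  ∃ a : ℕ → ℚ, Computable a ∧ ∀ n : ℕ, |α - (a n : ℝ)| < 2 ^ (-(n : ℤ))

/-- The canonical identification of natural numbers with binary strings:
`n` corresponds to the string `s` with `1s = n + 1` in binary. -/
def natToStr (n : ℕ) : List Bool := ((n + 1).bits).dropLast.reverse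

/-- The partition function `Z_V(T)`. -/
noncomputable def ZV (V : PrefixFreeMachine) (T : ℝ) : ℝ :=
  ∑' p : V.F.Dom, (2 : ℝ) ^ (-(((p : List Bool).length : ℝ)) / T)

/-- `Z_V(T; s)`: the mass of programs of `V` outputting `s`. -/
noncomputable def ZVs (V : PrefixFreeMachine) (T : ℝ) (s : List Bool) : ℝ :=
  ∑' p : {p : List Bool // s ∈ V.F p}, (2 : ℝ) ^ (-(((p : List Bool).length : ℝ)) / T)

/-!
`Z_V(T)` converges because `Dom V` is prefix-free (Kraft–McMillan) and `T ≤ 1`, and the fibres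
`{q | V q = i}` are disjoint parts of `Dom V`, so every finite sum of the `Z_V(T; i)` is at most
`Z_V(T)`. Hence a single `Z_V(T; i)` with `i > k` lies below `2^(-⌈n/T⌉ - d)`; compared with the
lower bound `2^(-|p_i|/T - d)` this gives `|p_i|/T > ⌈n/T⌉ ≥ n/T`.
-/

open Function Finset

theorem PrefixFreeSet.uniquelyDecodable {S : Set (List Bool)} (hS : PrefixFreeSet S)
    (hnil : [] ∉ S) : InformationTheory.UniquelyDecodable S := by
  intro L₁
  induction L₁ with
  | nil =>
    rintro (_ | ⟨w, L₂⟩) - h₂ heq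
    · rfl
    · obtain rfl : w = [] := (List.append_eq_nil_iff.mp heq.symm).1
      exact absurd (h₂ [] List.mem_cons_self) hnil
  | cons w L₁ ih =>
    rintro (_ | ⟨w', L₂⟩) h₁ h₂ heq
    · obtain rfl : w = [] := (List.append_eq_nil_iff.mp heq).1
      exact absurd (h₁ [] List.mem_cons_self) hnil
    · rw [List.flatten_cons, List.flatten_cons] at heq
      have hw : w ∈ S := h₁ w List.mem_cons_self
      have hw' : w' ∈ S := h₂ w' List.mem_cons_self
      obtain rfl : w = w' := by
        rcases List.prefix_or_prefix_of_prefix (List.prefix_append w L₁.flatten)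
            (heq ▸ List.prefix_append w' L₂.flatten) with h | h
        · exact hS w hw w' hw' h
        · exact (hS w' hw' w hw h).symm
      rw [ih L₂ (fun v hv => h₁ v (List.mem_cons_of_mem _ hv))
        (fun v hv => h₂ v (List.mem_cons_of_mem _ hv))
        (List.append_cancel_left heq)]

theorem PrefixFreeSet.sum_le_one {S : Set (List Bool)} (hS : PrefixFreeSet S)
    (u : Finset (List Bool)) (hu : ↑u ⊆ S) : ∑ w ∈ u, (1 / 2 : ℝ) ^ w.length ≤ 1 := by
  -- Kraft–McMillan needs `[] ∉ S`; otherwise prefix-freeness forces `S = {[]}`.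
  by_cases hnil : [] ∈ S
  · have hu_nil : u ⊆ {[]} := fun w hw =>
      Finset.mem_singleton.mpr (hS [] hnil w (hu hw) List.nil_prefix).symm
    calc ∑ w ∈ u, (1 / 2 : ℝ) ^ w.length
        ≤ ∑ w ∈ {[]}, (1 / 2 : ℝ) ^ w.length :=
          sum_le_sum_of_subset_of_nonneg hu_nil fun _ _ _ => by positivity
      _ = 1 := by simp
  · have hu_ud : InformationTheory.UniquelyDecodable (u : Set (List Bool)) :=
      PrefixFreeSet.uniquelyDecodable (fun p hp q hq => hS p (hu hp) q (hu hq))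
        fun h => hnil (hu h)
    simpa using InformationTheory.kraft_mcmillan_inequality hu_ud

theorem PrefixFreeSet.summable_two_rpow {S : Set (List Bool)} (hS : PrefixFreeSet S)
    {T : ℝ} (hT0 : 0 < T) (hT1 : T ≤ 1) :
    Summable fun w : S => (2 : ℝ) ^ (-((w : List Bool).length : ℝ) / T) := by
  have hkraft : Summable fun w : S => (1 / 2 : ℝ) ^ (w : List Bool).length := by
    refine summable_of_sum_le (c := 1) (fun _ => by positivity) fun u => ?_
    simpa using hS.sum_le_one (u.map (Embedding.subtype _)) (by simp)
  refine hkraft.of_nonneg_of_le (fun _ => by positivity) fun w => ?_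
  rw [one_div, ← Real.rpow_natCast, ← Real.rpow_neg_one, ← Real.rpow_mul zero_le_two]
  refine Real.rpow_le_rpow_of_exponent_le one_le_two ?_
  rw [neg_div, neg_one_mul, neg_le_neg_iff]
  exact le_div_self (Nat.cast_nonneg _) hT0 hT1

theorem sum_tsum_subtype_le_tsum_subtype {β ι : Type*} {f : β → ℝ} (hf : ∀ x, 0 ≤ f x)
    {S : Set β} (hS : Summable fun x : S => f x) {P : ι → Set β} (hPS : ∀ i, P i ⊆ S)
    (hP : Pairwise (Disjoint on P)) (t : Finset ι) :
    ∑ i ∈ t, ∑' x : P i, f x ≤ ∑' x : S, f x := by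
  have hsub : ∀ {A : Set β}, A ⊆ S → Summable fun x : A => f x := fun h =>
    hS.comp_injective (Set.inclusion_injective h)
  rw [← Summable.tsum_finset_bUnion_disjoint (hP.set_pairwise _) fun i _ => hsub (hPS i)]
  have hU : (⋃ i ∈ t, P i) ⊆ S := Set.iUnion₂_subset fun i _ => hPS i
  exact (hsub hU).tsum_le_tsum_of_inj (Set.inclusion hU) (Set.inclusion_injective hU)
    (fun _ _ => hf _) (fun _ => le_rfl) hS

theorem sum_ZVs_le_ZV (V : PrefixFreeMachine) {T : ℝ} (hT0 : 0 < T) (hT1 : T ≤ 1)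
    {ι : Type*} {s : ι → List Bool} (hs : Injective s) (t : Finset ι) :
    ∑ i ∈ t, ZVs V T (s i) ≤ ZV V T := by
  unfold ZVs ZV
  exact sum_tsum_subtype_le_tsum_subtype
    (f := fun q : List Bool => (2 : ℝ) ^ (-(q.length : ℝ) / T)) (S := V.F.Dom)
    (P := fun i => {q | s i ∈ V.F q}) (fun _ => by positivity)
    (V.prefixFree.summable_two_rpow hT0 hT1)
    (fun i q hq => Part.dom_iff_mem.mpr ⟨s i, hq⟩)
    (fun i j hij => Set.disjoint_left.mpr fun q hi hj => hij (hs (Part.mem_unique hi hj))) t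

theorem Nat.bits_injective : Injective Nat.bits := fun a b h => by
  rw [← Nat.ofDigits_digits 2 a, ← Nat.ofDigits_digits 2 b, Nat.digits_two_eq_bits,
    Nat.digits_two_eq_bits, h]

theorem Nat.bits_eq_dropLast_append_true {n : ℕ} (hn : n ≠ 0) :
    n.bits = n.bits.dropLast ++ [true] := by
  have h := Nat.getLast_digit_ne_zero 2 hn
  simp only [Nat.digits_two_eq_bits, List.getLast_map] at h
  generalize_proofs hne at h
  have hlast : n.bits.getLast hne = true := by
    contrapose! h
    simp [h]
  conv_lhs => rw [← List.dropLast_append_getLast hne, hlast]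

theorem natToStr_injective : Injective natToStr := fun a b h => by
  have hbits : (a + 1).bits = (b + 1).bits := by
    rw [Nat.bits_eq_dropLast_append_true a.succ_ne_zero,
      Nat.bits_eq_dropLast_append_true b.succ_ne_zero, List.reverse_injective h]
  exact Nat.succ_injective (Nat.bits_injective hbits)

theorem lt_of_sub_lt_sum_range {a : ℕ → ℝ} {Z ε : ℝ} (hZ : ∀ t : Finset ℕ, ∑ i ∈ t, a i ≤ Z)
    {k : ℕ} (hk : Z - ε < ∑ i ∈ range (k + 1), a i) {i : ℕ} (hi : k < i) : a i < ε := by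
  have hi' : i ∉ range (k + 1) := by simpa using hi
  have := hZ (insert i (range (k + 1)))
  rw [sum_insert hi'] at this
  linarith

theorem lt_of_two_rpow_lt_two_zpow_ceil {T x y : ℝ} (hT0 : 0 < T) (d : ℕ)
    (h : (2 : ℝ) ^ (-x / T - d) < (2 : ℝ) ^ (-⌈y / T⌉ - (d : ℤ))) : y < x := by
  rw [← Real.rpow_intCast, Real.rpow_lt_rpow_left_iff one_lt_two] at h
  push_cast at h
  have hceil := Int.le_ceil (y / T)
  rw [← div_lt_div_iff_of_pos_right hT0]
  linarith [neg_div T x]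

theorem setOf_mem_range_le_eq_of_forall_lt {α : Type*} {p : ℕ → α} {ℓ : α → ℕ} {n k : ℕ}
    (h : ∀ i, k < i → n < ℓ (p i)) :
    {q | q ∈ Set.range p ∧ ℓ q ≤ n} = {q | ∃ i ≤ k, q = p i ∧ ℓ q ≤ n} := by
  ext q
  constructor
  · rintro ⟨⟨i, rfl⟩, hq⟩
    exact ⟨i, not_lt.mp fun hi => (h i hi).not_ge hq, rfl, hq⟩
  · rintro ⟨i, -, rfl, hq⟩
    exact ⟨⟨i, rfl⟩, hq⟩

theorem halting_from_ZV_general (V : PrefixFreeMachine)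
    (T : ℝ) (hT0 : 0 < T) (hT1 : T ≤ 1)
    (F : PrefixFreeMachine)
    (p : ℕ → List Bool) (hprange : Set.range p = F.F.Dom)
    (d : ℕ) (hd : ∀ i : ℕ, (2 : ℝ) ^ (-((p i).length : ℝ) / T - d) ≤ ZVs V T (natToStr i))
    (n k : ℕ)
    (hk : ZV V T - (2 : ℝ) ^ (-(⌈(n : ℝ) / T⌉) - (d : ℤ)) <
      ∑ i ∈ Finset.range (k + 1), ZVs V T (natToStr i)) :
    (∀ i : ℕ, k < i → n < (p i).length) ∧
      {q : List Bool | q ∈ F.F.Dom ∧ q.length ≤ n} =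
        {q : List Bool | ∃ i ≤ k, q = p i ∧ q.length ≤ n} := by
  have long_tail : ∀ i, k < i → n < (p i).length := fun i hi => by
    have hsmall := lt_of_sub_lt_sum_range (sum_ZVs_le_ZV V hT0 hT1 natToStr_injective) hk hi
    exact_mod_cast lt_of_two_rpow_lt_two_zpow_ceil hT0 d ((hd i).trans_lt hsmall)
  exact ⟨long_tail, hprange ▸ setOf_mem_range_le_eq_of_forall_lt long_tail⟩

theorem halting_from_ZV (V : PrefixFreeMachine) (hV : V.Optimal)
    (T : ℝ) (hT : ComputableReal T) (hT0 : 0 < T) (hT1 : T ≤ 1)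
    (F : PrefixFreeMachine) (hFinf : F.F.Dom.Infinite)
    (p : ℕ → List Bool) (hp : Function.Injective p) (hprange : Set.range p = F.F.Dom)
    (d : ℕ) (hd : ∀ i : ℕ, (2 : ℝ) ^ (-((p i).length : ℝ) / T - d) ≤ ZVs V T (natToStr i))
    (n k : ℕ)
    (hk : ZV V T - (2 : ℝ) ^ (-(⌈(n : ℝ) / T⌉) - (d : ℤ)) <
      ∑ i ∈ Finset.range (k + 1), ZVs V T (natToStr i)) :
    (∀ i : ℕ, k < i → n < (p i).length) ∧
      {q : List Bool | q ∈ F.F.Dom ∧ q.length ≤ n} =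
        {q : List Bool | ∃ i ≤ k, q = p i ∧ q.length ≤ n} :=
  halting_from_ZV_general V T hT0 hT1 F p hprange d hd n k hk
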